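/- For all x with 0 < x < 1, arcsin x > (8/3)x / (√3 + √(1−x²)). -/

import Mathlib

/-!
With θ = arcsin x the claim reads 8 sin θ < 3θ(√3 + cos θ) for 0 < θ < π/2. Integrating
sin y ≥ y - y³/6 three times gives sin θ ≤ θ - θ³/6 + θ⁵/120 and
cos θ ≥ 1 - θ²/2 + θ⁴/24 - θ⁶/720; after division by θ the claim then follows from
(3√3 - 5) - t/6 + 7t²/120 - t³/240 > 0 for t = θ² ≤ π²/4. The constant 3√3 - 5 ≈ 0.196 is
the slope of the difference at θ = 0, which is why √3 is the optimal parameter.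
-/

open Real

lemma le_of_hasDerivAt_le {f g f' g' : ℝ → ℝ} (hf : ∀ y, HasDerivAt f (f' y) y)
    (hg : ∀ y, HasDerivAt g (g' y) y) (h₀ : f 0 ≤ g 0) (hd : ∀ y, 0 ≤ y → f' y ≤ g' y)
    {x : ℝ} (hx : 0 ≤ x) : f x ≤ g x :=
  image_le_of_deriv_right_le_deriv_boundary
    (fun y _ => (hf y).continuousAt.continuousWithinAt) (fun y _ => (hf y).hasDerivWithinAt) h₀
    (fun y _ => (hg y).continuousAt.continuousWithinAt) (fun y _ => (hg y).hasDerivWithinAt)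
    (fun y hy => hd y hy.1) ⟨hx, le_rfl⟩

namespace Real

lemma cos_le_taylor_four (x : ℝ) : cos x ≤ 1 - x ^ 2 / 2 + x ^ 4 / 24 := by
  wlog hx : 0 ≤ x
  · simpa [Even.neg_pow, (by decide : Even 4)] using this (-x) (by linarith)
  refine le_of_hasDerivAt_le (g := fun y => 1 - y ^ 2 / 2 + y ^ 4 / 24)
    (f' := fun y => -sin y) (g' := fun y => -y + y ^ 3 / 6)
    hasDerivAt_cos (fun y => ?_) (by simp) (fun y hy => by linarith [sin_ge_sub_cube hy]) hx
  exact ((((hasDerivAt_pow 2 y).div_const 2).const_sub 1).add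
    ((hasDerivAt_pow 4 y).div_const 24)).congr_deriv (by push_cast; ring)

lemma sin_le_taylor_five {x : ℝ} (hx : 0 ≤ x) : sin x ≤ x - x ^ 3 / 6 + x ^ 5 / 120 := by
  refine le_of_hasDerivAt_le (g := fun y => y - y ^ 3 / 6 + y ^ 5 / 120)
    (f' := cos) (g' := fun y => 1 - y ^ 2 / 2 + y ^ 4 / 24)
    hasDerivAt_sin (fun y => ?_) (by simp) (fun y _ => cos_le_taylor_four y) hx
  exact (((hasDerivAt_id y).sub ((hasDerivAt_pow 3 y).div_const 6)).add
    ((hasDerivAt_pow 5 y).div_const 120)).congr_deriv (by push_cast; ring)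

lemma taylor_six_le_cos (x : ℝ) : 1 - x ^ 2 / 2 + x ^ 4 / 24 - x ^ 6 / 720 ≤ cos x := by
  wlog hx : 0 ≤ x
  · simpa [Even.neg_pow, (by decide : Even 4), (by decide : Even 6)] using this (-x) (by linarith)
  refine le_of_hasDerivAt_le (f := fun y => 1 - y ^ 2 / 2 + y ^ 4 / 24 - y ^ 6 / 720)
    (f' := fun y => -y + y ^ 3 / 6 - y ^ 5 / 120) (g' := fun y => -sin y)
    (fun y => ?_) hasDerivAt_cos (by simp) (fun y hy => by linarith [sin_le_taylor_five hy]) hx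
  exact (((((hasDerivAt_pow 2 y).div_const 2).const_sub 1).add
    ((hasDerivAt_pow 4 y).div_const 24)).sub ((hasDerivAt_pow 6 y).div_const 720)).congr_deriv
    (by push_cast; ring)

lemma eight_mul_sin_lt_three_mul_mul_sqrt_three_add_cos {θ : ℝ} (hθ : 0 < θ)
    (hθπ : θ ≤ π / 2) :
    8 * sin θ < 3 * θ * (√3 + cos θ) := by
  have hsqrt : 1.732 < √3 := by
    rw [lt_sqrt (by norm_num)]; norm_num
  have hθ' : θ ≤ 1.5708 := by linarith [pi_lt_d4]
  have ht : θ ^ 2 ≤ 2.47 := by nlinarith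
  -- the cubic is smallest near t = 1.43, where it is still about 0.065
  have hcubic : 0 < 0.196 - θ ^ 2 / 6 + 7 / 120 * (θ ^ 2) ^ 2 - (θ ^ 2) ^ 3 / 240 := by
    nlinarith [sq_nonneg (θ ^ 2 - 1.43), sq_nonneg θ, mul_nonneg (sq_nonneg θ) (sub_nonneg.2 ht)]
  nlinarith [sin_le_taylor_five hθ.le, taylor_six_le_cos θ]

end Real

theorem stmt_16 (x : ℝ) (hx : 0 < x) (hx1 : x < 1) :
    Real.arcsin x > (8 / 3) * x / (Real.sqrt 3 + Real.sqrt (1 - x ^ 2)) := by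
  have hden : 0 < √3 + √(1 - x ^ 2) := by positivity
  have hkey := eight_mul_sin_lt_three_mul_mul_sqrt_three_add_cos (arcsin_pos.2 hx)
    (arcsin_le_pi_div_two x)
  rw [sin_arcsin (by linarith) hx1.le, cos_arcsin] at hkey
  rw [gt_iff_lt, div_lt_iff₀ hden]
  linarith
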